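/- arXiv:2001.04340 — 3 statements merged into one kernel-verified Lean document; each statement's English description precedes it below -/
import Mathlib

section
/- Let X be a normed space, Y a vector space, X̃ ⊆ X a linear subspace, and G : [0,τ] × X × Y → ℝ a Lagrangian such that for all t, u⁰, uᵗ, p the map s ↦ G(t, s·uᵗ + (1−s)·u⁰, p) is absolutely continuous on [0,1] with derivative s ↦ ∂ᵤG(t, s·uᵗ+(1−s)·u⁰, p)(uᵗ−u⁰) which is integrable. If uᵗ − u⁰ ∈ X̃ and qᵗ ∈ Y satisfies the averaged adjoint equation ∫₀¹ ∂ᵤG(t, s·uᵗ + (1−s)·u⁰, qᵗ)(φ) ds = 0 for all φ ∈ X̃, then G(t, uᵗ, qᵗ) = G(t, u⁰, qᵗ). -/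
open Set

theorem intervalIntegral.integral_eq_sub_of_hasDerivWithinAt_Icc {E : Type*}
    [NormedAddCommGroup E] [NormedSpace ℝ E] [CompleteSpace E] {f f' : ℝ → E} {a b : ℝ}
    (hab : a ≤ b) (hderiv : ∀ x ∈ Icc a b, HasDerivWithinAt f (f' x) (Icc a b) x)
    (hint : IntervalIntegrable f' MeasureTheory.volume a b) :
    ∫ x in a..b, f' x = f b - f a :=
  integral_eq_sub_of_hasDeriv_right_of_le hab
    (fun x hx => (hderiv x hx).continuousWithinAt)
    (fun x hx => (hderiv x (Ioo_subset_Icc_self hx)).mono_of_mem_nhdsWithin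
      (Icc_mem_nhdsGT_of_mem (Ioo_subset_Ico_self hx)))
    hint

theorem stmt_1_general {X : Type*} [NormedAddCommGroup X] [NormedSpace ℝ X] {Y : Type*}
    (G : ℝ → X → Y → ℝ) (dG : ℝ → X → Y → X → ℝ)
    (Xt : Submodule ℝ X)
    (t : ℝ) (u0 ut : X) (qt : Y)
    -- absolute continuity of `s ↦ G(t, s uᵗ + (1−s) u⁰, qᵗ)` with derivative
    -- `s ↦ ∂ᵤG(t, s uᵗ + (1−s) u⁰, qᵗ)(uᵗ − u⁰)`:
    (hderiv : ∀ s ∈ Set.Icc (0:ℝ) 1,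
      HasDerivWithinAt (fun s : ℝ => G t (s • ut + (1 - s) • u0) qt)
        (dG t (s • ut + (1 - s) • u0) qt (ut - u0)) (Set.Icc (0:ℝ) 1) s)
    (hint : ∀ v : X,
      IntervalIntegrable (fun s => dG t (s • ut + (1 - s) • u0) qt v)
        MeasureTheory.volume 0 1)
    -- `uᵗ − u⁰` belongs to the test subspace:
    (hmem : ut - u0 ∈ Xt)
    -- the averaged adjoint equation:
    (hAAE : ∀ φ ∈ Xt, (∫ s in (0:ℝ)..1, dG t (s • ut + (1 - s) • u0) qt φ) = 0) :
    G t ut qt = G t u0 qt := by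
  -- Testing the averaged adjoint equation with `φ = uᵗ − u⁰` kills the mean value remainder.
  have hmean := intervalIntegral.integral_eq_sub_of_hasDerivWithinAt_Icc zero_le_one hderiv
    (hint (ut - u0))
  rw [hAAE _ hmem, eq_comm, sub_eq_zero] at hmean
  simpa using hmean

/-- Averaged adjoint reparametrisation (Lemma 2.4): if `qᵗ` solves the averaged
adjoint equation for the pair `(u⁰, uᵗ)` and `uᵗ − u⁰` lies in the test subspace `X̃`,
then `G(t, uᵗ, qᵗ) = G(t, u⁰, qᵗ)`.  Here `dG t u p v` denotes the one-sided
directional derivative `∂ᵤG(t,u,p)(v)`, and the (H1)-type regularity is encoded via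
`hdir`, `hderiv` and `hint`. -/
theorem stmt_1 {X : Type*} [NormedAddCommGroup X] [NormedSpace ℝ X] {Y : Type*}
    (τ : ℝ) (hτ : 0 < τ) (G : ℝ → X → Y → ℝ) (dG : ℝ → X → Y → X → ℝ)
    (Xt : Submodule ℝ X)
    (t : ℝ) (ht : t ∈ Set.Icc 0 τ) (u0 ut : X) (qt : Y)
    -- `dG` is the one-sided directional derivative of `G` in the second variable:
    (hdir : ∀ s ∈ Set.Icc (0:ℝ) 1, ∀ v : X,
      Filter.Tendsto
        (fun h : ℝ =>
          (G t ((s • ut + (1 - s) • u0) + h • v) qt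
            - G t (s • ut + (1 - s) • u0) qt) / h)
        (nhdsWithin 0 (Set.Ioi 0)) (nhds (dG t (s • ut + (1 - s) • u0) qt v)))
    -- absolute continuity of `s ↦ G(t, s uᵗ + (1−s) u⁰, qᵗ)` with derivative
    -- `s ↦ ∂ᵤG(t, s uᵗ + (1−s) u⁰, qᵗ)(uᵗ − u⁰)`:
    (hderiv : ∀ s ∈ Set.Icc (0:ℝ) 1,
      HasDerivWithinAt (fun s : ℝ => G t (s • ut + (1 - s) • u0) qt)
        (dG t (s • ut + (1 - s) • u0) qt (ut - u0)) (Set.Icc (0:ℝ) 1) s)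
    (hint : ∀ v : X,
      IntervalIntegrable (fun s => dG t (s • ut + (1 - s) • u0) qt v)
        MeasureTheory.volume 0 1)
    -- `uᵗ − u⁰` belongs to the test subspace:
    (hmem : ut - u0 ∈ Xt)
    -- the averaged adjoint equation:
    (hAAE : ∀ φ ∈ Xt, (∫ s in (0:ℝ)..1, dG t (s • ut + (1 - s) • u0) qt φ) = 0) :
    G t ut qt = G t u0 qt :=
  stmt_1_general G dG Xt t u0 ut qt hderiv hint hmem hAAE
end

section
/- Let G be a Lagrangian with G(t,u,p) = f(t,u) + e(t,u,p), e linear in p, and let E(t) = {u : e(t,u,φ)=0 ∀φ∈Y}, X(t) the set of minimisers of u ↦ f(t,u) over E(t), and g(t) = inf_{u∈E(t)} f(t,u). Then for t ∈ (0,τ], (u⁰,uᵗ) ∈ E(0) × X(t) with uᵗ−u⁰ ∈ X̃, and any solution qᵗ of the averaged adjoint equation for the pair (u⁰,uᵗ), one has g(t) = G(t,uᵗ,qᵗ) = G(t,u⁰,qᵗ). -/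
/-- Corollary 2.6: for `t ∈ (0,τ]`, a pair `(u⁰, uᵗ) ∈ E(0) × X(t)` with
`uᵗ − u⁰ ∈ X̃` and any averaged adjoint `qᵗ`, one has
`g(t) = G(t,uᵗ,qᵗ) = G(t,u⁰,qᵗ)`, where `g(t) = inf_{u ∈ E(t)} f(t,u)` and
`G(t,u,p) = f(t,u) + e(t,u,p)` with `e` linear in the last argument. -/
theorem stmt_2 {X : Type*} [NormedAddCommGroup X] [NormedSpace ℝ X]
    {Y : Type*} [AddCommGroup Y] [Module ℝ Y]
    (τ : ℝ) (hτ : 0 < τ)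
    (f : ℝ → X → ℝ) (e : ℝ → X → Y → ℝ)
    -- `e` is linear in its last argument:
    (helin : ∀ t u, IsLinearMap ℝ (e t u))
    (G : ℝ → X → Y → ℝ) (hG : ∀ t u p, G t u p = f t u + e t u p)
    -- sets of states, minimisers, and the value function:
    (E : ℝ → Set X) (hE : ∀ t, E t = {u | ∀ φ : Y, e t u φ = 0})
    (g : ℝ → ℝ) (hg : ∀ t, g t = sInf ((f t) '' (E t)))
    (dG : ℝ → X → Y → X → ℝ) (Xt : Submodule ℝ X)
    (t : ℝ) (ht : t ∈ Set.Ioc 0 τ) (u0 ut : X)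
    (hu0 : u0 ∈ E 0)
    -- `uᵗ` is a minimiser over `E(t)`:
    (hut : ut ∈ E t) (hmin : ∀ u ∈ E t, f t ut ≤ f t u)
    (hmem : ut - u0 ∈ Xt)
    -- (H1)-type regularity along the segment from `u⁰` to `uᵗ`:
    (hdir : ∀ q : Y, ∀ s ∈ Set.Icc (0:ℝ) 1, ∀ v : X,
      Filter.Tendsto
        (fun h : ℝ =>
          (G t ((s • ut + (1 - s) • u0) + h • v) q
            - G t (s • ut + (1 - s) • u0) q) / h)
        (nhdsWithin 0 (Set.Ioi 0)) (nhds (dG t (s • ut + (1 - s) • u0) q v)))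
    (hderiv : ∀ q : Y, ∀ s ∈ Set.Icc (0:ℝ) 1,
      HasDerivWithinAt (fun s : ℝ => G t (s • ut + (1 - s) • u0) q)
        (dG t (s • ut + (1 - s) • u0) q (ut - u0)) (Set.Icc (0:ℝ) 1) s)
    (hint : ∀ q : Y, ∀ v : X,
      IntervalIntegrable (fun s => dG t (s • ut + (1 - s) • u0) q v)
        MeasureTheory.volume 0 1)
    (qt : Y)
    -- `qᵗ` solves the averaged adjoint equation for the pair `(u⁰, uᵗ)`:
    (hAAE : ∀ φ ∈ Xt, (∫ s in (0:ℝ)..1, dG t (s • ut + (1 - s) • u0) qt φ) = 0) :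
    g t = G t ut qt ∧ G t ut qt = G t u0 qt := by

  have hEut : ∀ φ : Y, e t ut φ = 0 := by
    have := hut; rw [hE] at this; exact this
  have hGut : G t ut qt = f t ut := by
    rw [hG, hEut, add_zero]
  constructor
  · -- g t = f t ut = G t ut qt
    rw [hg, hGut]
    refine le_antisymm ?_ ?_
    · exact csInf_le ⟨f t ut, by rintro x ⟨u, hu, rfl⟩; exact hmin u hu⟩
        ⟨ut, hut, rfl⟩
    · exact le_csInf ⟨f t ut, ut, hut, rfl⟩ (by rintro x ⟨u, hu, rfl⟩; exact hmin u hu)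
  · -- FTC argument
    set F : ℝ → ℝ := fun s => G t (s • ut + (1 - s) • u0) qt with hF
    have hcont : ContinuousOn F (Set.Icc 0 1) := fun s hs =>
      (hderiv qt s hs).continuousWithinAt
    have hd : ∀ s ∈ Set.Ioo (0:ℝ) 1,
        HasDerivWithinAt F (dG t (s • ut + (1 - s) • u0) qt (ut - u0)) (Set.Ioi s) s := by
      intro s hs
      exact ((hderiv qt s (Set.Ioo_subset_Icc_self hs)).hasDerivAt
        (Icc_mem_nhds hs.1 hs.2)).hasDerivWithinAt
    have key : (∫ s in (0:ℝ)..1, dG t (s • ut + (1 - s) • u0) qt (ut - u0))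
        = F 1 - F 0 :=
      intervalIntegral.integral_eq_sub_of_hasDeriv_right_of_le (by norm_num)
        hcont hd (hint qt (ut - u0))
    rw [hAAE (ut - u0) hmem] at key
    have h1 : F 1 = G t ut qt := by simp [hF]
    have h0 : F 0 = G t u0 qt := by simp [hF]
    rw [h1, h0] at key
    linarith
end

section
/- Let A(t) = [[1,t],[t,1]], Q = diag(1,2), u⁰ = (1,0), and for small t > 0 let û^t₋ = u₋ᵗ/√(A(t)u₋ᵗ·u₋ᵗ) where u₋ᵗ = (1, bᵗ), bᵗ = −t/(λ⁻(t)−2), λ⁻(t) = (3 − √(1+8t²))/2. Then for all sufficiently small t > 0 there is no qᵗ ∈ ℝ satisfying Q(û^t₋ + u⁰) + qᵗ A(t)(û^t₋ + u⁰) = 0, and likewise no qᵗ with Q(û^t₋ − u⁰) + qᵗ A(t)(û^t₋ − u⁰) = 0. -/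
open Matrix

set_option maxHeartbeats 1000000 in
/-- Lemma 3.10: non-existence of the averaged adjoint for the pairs
`(±u⁰, û₋ᵗ)` for all sufficiently small `t > 0`, where `u⁰ = (1,0)`,
`û₋ᵗ = u₋ᵗ/√(A(t)u₋ᵗ·u₋ᵗ)`, `u₋ᵗ = (1, bᵗ)`. -/
theorem stmt_16
    (A : ℝ → Matrix (Fin 2) (Fin 2) ℝ) (hA : ∀ t, A t = !![1, t; t, 1])
    (Q : Matrix (Fin 2) (Fin 2) ℝ) (hQ : Q = !![1, 0; 0, 2])
    (u0 : Fin 2 → ℝ) (hu0 : u0 = ![1, 0])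
    (lm b : ℝ → ℝ)
    (hlm : ∀ t, lm t = (3 - Real.sqrt (1 + 8 * t ^ 2)) / 2)
    (hb : ∀ t, b t = -t / (lm t - 2))
    (um uhat : ℝ → Fin 2 → ℝ)
    (hum : ∀ t, um t = ![1, b t])
    (huhat : ∀ t, uhat t =
      (Real.sqrt ((A t).mulVec (um t) ⬝ᵥ um t))⁻¹ • um t) :
    ∃ τ > (0:ℝ), ∀ t ∈ Set.Ioo 0 τ,
      (¬ ∃ q : ℝ, Q.mulVec (uhat t + u0) + q • (A t).mulVec (uhat t + u0) = 0) ∧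
      (¬ ∃ q : ℝ, Q.mulVec (uhat t - u0) + q • (A t).mulVec (uhat t - u0) = 0) := by
  refine ⟨1/10, by norm_num, ?_⟩
  rintro t ⟨ht0, ht1⟩
  have ht2 : t^2 < 1/100 := by nlinarith
  set s := Real.sqrt (1 + 8*t^2) with hsdef
  have hs2 : s^2 = 1 + 8*t^2 := Real.sq_sqrt (by positivity)
  have hsnn : 0 ≤ s := Real.sqrt_nonneg _
  have hs1 : 1 ≤ s := by nlinarith
  have hsu : s ≤ 1 + 4*t^2 := by nlinarith
  have h1s : (0:ℝ) < 1 + s := by linarith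
  have hbt : b t = 2*t/(1+s) := by
    rw [hb t, hlm t, show (1 + 8 * t ^ 2) = (1 + 8*t^2) by ring, ← hsdef]
    rw [div_eq_div_iff (by nlinarith) h1s.ne']
    ring
  have hb0 : 0 < b t := by rw [hbt]; positivity
  have hble : b t ≤ t := by
    rw [hbt, div_le_iff₀ h1s]; nlinarith
  have hblow : t ≤ b t * (1 + 2*t^2) := by
    rw [hbt, div_mul_eq_mul_div, le_div_iff₀ h1s]; nlinarith
  have hdot : (A t).mulVec (um t) ⬝ᵥ um t = 1 + 2*t*(b t) + (b t)^2 := by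
    rw [hA, hum]
    simp [Matrix.mulVec, dotProduct, Fin.sum_univ_two]
    ring
  set n := Real.sqrt (1 + 2*t*(b t) + (b t)^2) with hndef
  have hn2 : n^2 = 1 + 2*t*(b t) + (b t)^2 := Real.sq_sqrt (by positivity)
  have hnnn : 0 ≤ n := Real.sqrt_nonneg _
  have hn1 : 1 ≤ n := by nlinarith [mul_pos ht0 hb0, sq_nonneg (b t)]
  have hn0 : (0:ℝ) < n := lt_of_lt_of_le one_pos hn1
  have huh : uhat t = n⁻¹ • ![1, b t] := by rw [huhat t, hdot, hum t]
  have hnm : n - 1 ≤ (3/2)*t^2 := by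
    nlinarith [sq_nonneg (n-1), mul_nonneg ht0.le (sub_nonneg.2 hble), hb0.le, hble]
  have hm : n * n⁻¹ = 1 := mul_inv_cancel₀ hn0.ne'
  constructor
  · rintro ⟨q, hq⟩
    rw [hQ, hA, huh, hu0] at hq
    have h0 := congrFun hq 0
    have h1 := congrFun hq 1
    simp [Matrix.mulVec, dotProduct, Fin.sum_univ_two] at h0 h1
    clear hq hA hQ hu0 hlm hb hum huhat huh hdot
    have h0n : (1+n) + (q*(1+n) + q*((b t)*t)) = 0 := by
      linear_combination n*h0 - (1 + q + q*(b t)*t)*hm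
    have h1n : 2*(b t) + (q*((1+n)*t) + q*(b t)) = 0 := by
      linear_combination n*h1 - (2*(b t) + q*t + q*(b t))*hm
    have key2 : t*(1+n)^2 - (1+n)*(b t) - 2*t*(b t)^2 = 0 := by
      linear_combination (t*(1+n) + b t)*h0n - ((1+n) + t*(b t))*h1n
    have e1 : (1+n)*(b t) ≤ (1+n)*t :=
      mul_le_mul_of_nonneg_left hble (by linarith)
    have ebsq : (b t)^2 ≤ t^2 := by nlinarith [hb0.le, hble]
    have e2 : 2*t*(b t)^2 ≤ 2*t*t^2 :=
      mul_le_mul_of_nonneg_left ebsq (by positivity)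
    have e3 : 2*t + t*(1+n) ≤ t*(1+n)^2 := by
      nlinarith [mul_nonneg (mul_nonneg ht0.le (by linarith : (0:ℝ) ≤ n-1))
        (by linarith : (0:ℝ) ≤ n+2)]
    have ht3 : t^3 ≤ t/100 := by
      nlinarith [mul_nonneg ht0.le (show (0:ℝ) ≤ 1/100 - t^2 by linarith)]
    nlinarith [key2, e1, e2, e3, ht3]
  · rintro ⟨q, hq⟩
    rw [hQ, hA, huh, hu0] at hq
    have h0 := congrFun hq 0
    have h1 := congrFun hq 1
    simp [Matrix.mulVec, dotProduct, Fin.sum_univ_two] at h0 h1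
    clear hq hA hQ hu0 hlm hb hum huhat huh hdot
    have h0n : (1-n) + (q*(1-n) + q*((b t)*t)) = 0 := by
      linear_combination n*h0 - (1 + q + q*(b t)*t)*hm
    have h1n : 2*(b t) + (q*((1-n)*t) + q*(b t)) = 0 := by
      linear_combination n*h1 - (2*(b t) + q*t + q*(b t))*hm
    have key2 : t*(1-n)^2 - (1-n)*(b t) - 2*t*(b t)^2 = 0 := by
      linear_combination (t*(1-n) + b t)*h0n - ((1-n) + t*(b t))*h1n
    have ha : t*(1-n)^2 ≤ (9/4)*t^5 := by
      nlinarith [mul_nonneg ht0.le (mul_nonneg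
        (by linarith : (0:ℝ) ≤ 3/2*t^2 - (n-1))
        (by nlinarith : (0:ℝ) ≤ 3/2*t^2 + (n-1)))]
    have hbb : (n-1)*(b t) ≤ (3/2)*t^3 := by
      nlinarith [mul_nonneg (by linarith : (0:ℝ) ≤ n-1) (sub_nonneg.2 hble),
        mul_nonneg ht0.le (by linarith : (0:ℝ) ≤ 3/2*t^2 - (n-1))]
    have hb51 : 50*t ≤ 51*(b t) := by
      nlinarith [mul_pos hb0 (show (0:ℝ) < 1/100 - t^2 by linarith)]
    have hcc : (5000/2601)*t^3 ≤ 2*t*(b t)^2 := by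
      nlinarith [mul_nonneg ht0.le (mul_nonneg
        (by linarith : (0:ℝ) ≤ 51*(b t) - 50*t)
        (by linarith : (0:ℝ) ≤ 51*(b t) + 50*t))]
    have ht5 : t^5 ≤ t^3/100 := by
      nlinarith [mul_nonneg (pow_pos ht0 3).le (show (0:ℝ) ≤ 1/100 - t^2 by linarith)]
    nlinarith [key2, ha, hbb, hcc, ht5, pow_pos ht0 3]
end
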